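/- Let μ be a probability distribution on the 16 Boolean rules whose support is contained in {φ3, φ6, φ9, φ12}, and consider the random Boolean cellular automaton on ℤ with rule distribution μ. Then for every cell i, the random variables X_i(0), X_i(1), X_i(2), … are independent Bernoulli(1/2) random variables; equivalently, for every t ≥ 1 and every (ε_0, …, ε_{t−1}) ∈ {0,1}^t, the probability that X_i(s) = ε_s for all 0 ≤ s ≤ t−1 equals 2^{−t}. -/

import Mathlib

open MeasureTheory ProbabilityTheory

/-- A Boolean rule: a function `{0,1} × {0,1} → {0,1}`. -/
abbrev Rule : Type := Bool → Bool → Bool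

def phi0 : Rule := fun _ _ => false
def phi2 : Rule := fun x y => !x && y
def phi3 : Rule := fun x _ => !x
def phi4 : Rule := fun x y => x && !y
def phi5 : Rule := fun _ y => !y
def phi6 : Rule := fun x y => xor x y
def phi9 : Rule := fun x y => !(xor x y)
def phi10 : Rule := fun _ y => y
def phi11 : Rule := fun x y => !(x && !y)
def phi12 : Rule := fun x _ => x
def phi13 : Rule := fun x y => !(!x && y)
def phi15 : Rule := fun _ _ => true

/-- The Bernoulli(1/2) distribution on `Bool`. -/
noncomputable def berHalf : Measure Bool :=
  (2 : ENNReal)⁻¹ • (Measure.dirac true + Measure.dirac false)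

/-- The support of a rule distribution: the set of rules of positive probability. -/
def ruleSupport (mu : Measure Rule) : Set Rule := {r | mu {r} ≠ 0}

/-- Evolution of an inhomogeneous cellular automaton on ℤ:
`x_i(t+1) = φ_i(x_{i-1}(t), x_{i+1}(t))`. -/
def evolveZ (φ : ℤ → Rule) (x0 : ℤ → Bool) : ℕ → ℤ → Bool
  | 0 => x0
  | t+1 => fun i => φ i (evolveZ φ x0 t (i-1)) (evolveZ φ x0 t (i+1))

/-- A trajectory `t ↦ x(t)` stabilizes if it is eventually constant. -/
def Stabilizes (x : ℕ → Bool) : Prop := ∃ T, ∀ t, T ≤ t → x t = x T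

/-- The trajectory of cell `i` in the realization where cell `j` has rule `(W j ω).1`
and initial value `(W j ω).2`. -/
def traj (W : ℤ → Ω → Rule × Bool) (ω : Ω) (i : ℤ) : ℕ → Bool :=
  fun t => evolveZ (fun j => (W j ω).1) (fun j => (W j ω).2) t i

lemma evolveZ_congr : ∀ (t : ℕ) (i : ℤ) (φ φ' : ℤ → Rule) (x0 x0' : ℤ → Bool),
    (∀ j, i - t + 1 ≤ j → j ≤ i + t - 1 → φ j = φ' j) →
    (∀ j, i - t ≤ j → j ≤ i + t → x0 j = x0' j) →
    evolveZ φ x0 t i = evolveZ φ' x0' t i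
  | 0, i, φ, φ', x0, x0', hφ, hx => hx i (by omega) (by omega)
  | (t+1), i, φ, φ', x0, x0', hφ, hx => by
    show φ i (evolveZ φ x0 t (i-1)) (evolveZ φ x0 t (i+1))
       = φ' i (evolveZ φ' x0' t (i-1)) (evolveZ φ' x0' t (i+1))
    rw [hφ i (by omega) (by omega),
      evolveZ_congr t (i-1) φ φ' x0 x0'
        (fun j h1 h2 => hφ j (by omega) (by omega))
        (fun j h1 h2 => hx j (by omega) (by omega)),
      evolveZ_congr t (i+1) φ φ' x0 x0'
        (fun j h1 h2 => hφ j (by omega) (by omega))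
        (fun j h1 h2 => hx j (by omega) (by omega))]

lemma rule_xor {r : Rule} (h : r ∈ ({phi3, phi6, phi9, phi12} : Set Rule)) (a b c : Bool) :
    r (xor a b) c = xor a (r b c) := by
  simp only [Set.mem_insert_iff, Set.mem_singleton_iff] at h
  rcases h with rfl | rfl | rfl | rfl <;> cases a <;> cases b <;> cases c <;> rfl

lemma evolveZ_xor : ∀ (t : ℕ) (i k : ℤ), k = i - t →
    ∀ (φ : ℤ → Rule) (x0 : ℤ → Bool),
    (∀ j, i - t + 1 ≤ j → j ≤ i + t - 1 → φ j ∈ ({phi3, phi6, phi9, phi12} : Set Rule)) →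
    evolveZ φ x0 t i = xor (x0 k) (evolveZ φ (fun j => if j = k then false else x0 j) t i)
  | 0, i, k, hk, φ, x0, h => by
    have hik : k = i := by omega
    subst hik
    show x0 k = xor (x0 k) (if k = k then false else x0 k)
    simp
  | (t+1), i, k, hk, φ, x0, h => by
    have hk1 : k = (i-1) - t := by omega
    have hC : evolveZ φ x0 t (i+1)
        = evolveZ φ (fun j => if j = k then false else x0 j) t (i+1) :=
      evolveZ_congr t (i+1) _ _ _ _ (fun j _ _ => rfl)
        (fun j h1 h2 => (if_neg (by omega)).symm)
    have hB := evolveZ_xor t (i-1) k hk1 φ x0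
      (fun j h1 h2 => h j (by omega) (by omega))
    show φ i (evolveZ φ x0 t (i-1)) (evolveZ φ x0 t (i+1)) = _
    rw [hB, hC, rule_xor (h i (by omega) (by omega))]
    rfl

-- ### berHalf facts

lemma berHalf_singleton (b : Bool) : berHalf {b} = 2⁻¹ := by
  cases b <;>
    simp [berHalf, Measure.dirac_apply, Set.indicator_apply]

instance : IsProbabilityMeasure berHalf := by
  constructor
  simp only [berHalf, Measure.smul_apply, Measure.coe_add, Pi.add_apply, measure_univ,
    smul_eq_mul]
  rw [one_add_one_eq_two, ENNReal.inv_mul_cancel two_ne_zero ENNReal.ofNat_ne_top]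

-- ### restriction machinery

def ruleOf (J : Finset ℤ) (u : J → Rule × Bool) : ℤ → Rule :=
  fun j => if h : j ∈ J then (u ⟨j, h⟩).1 else phi12

def valOf (J : Finset ℤ) (u : J → Rule × Bool) : ℤ → Bool :=
  fun j => if h : j ∈ J then (u ⟨j, h⟩).2 else false

lemma traj_restr {Ω : Type*} (W : ℤ → Ω → Rule × Bool) (i : ℤ) (s : ℕ) (J : Finset ℤ)
    (hJ : ∀ j : ℤ, i - s ≤ j → j ≤ i + s → j ∈ J) (ω : Ω) :
    traj W ω i s = evolveZ (ruleOf J (fun j => W j ω)) (valOf J (fun j => W j ω)) s i := by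
  unfold traj
  refine evolveZ_congr s i _ _ _ _ (fun j h1 h2 => ?_) (fun j h1 h2 => ?_)
  · have hjJ : j ∈ J := hJ j (by omega) (by omega)
    simp only [ruleOf, dif_pos hjJ]
  · have hjJ : j ∈ J := hJ j h1 h2
    simp only [valOf, dif_pos hjJ]

lemma measurable_traj {Ω : Type*} [MeasurableSpace Ω] (W : ℤ → Ω → Rule × Bool)
    (hmeas : ∀ i, Measurable (W i)) (i : ℤ) (t : ℕ) :
    Measurable fun ω => traj W ω i t := by
  have h : (fun ω => traj W ω i t)
      = (fun u : (Finset.Icc (i - t) (i + t) : Finset ℤ) → Rule × Bool =>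
          evolveZ (ruleOf _ u) (valOf _ u) t i) ∘ (fun ω j => W j ω) := by
    funext ω
    exact traj_restr W i t _ (fun j h1 h2 => Finset.mem_Icc.mpr ⟨h1, h2⟩) ω
  rw [h]
  exact (measurable_of_countable _).comp (measurable_pi_lambda _ fun j => hmeas j)

-- ### the main cylinder computation

lemma cylinder_prob (mu : Measure Rule) [IsProbabilityMeasure mu]
    (hsupp : ruleSupport mu ⊆ {phi3, phi6, phi9, phi12})
    {Ω : Type*} [MeasurableSpace Ω] (P : Measure Ω) [IsProbabilityMeasure P]
    (W : ℤ → Ω → Rule × Bool) (hmeas : ∀ i, Measurable (W i))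
    (hindep : iIndepFun W P)
    (hlaw : ∀ i, Measure.map (W i) P = mu.prod berHalf) (i : ℤ) :
    ∀ (n : ℕ) (T : Finset ℕ), T.card = n → ∀ ε : ℕ → Bool,
      P {ω | ∀ s ∈ T, traj W ω i s = ε s} = (2 : ENNReal)⁻¹ ^ n := by
  -- the bad-rule events are null
  have bad_null : ∀ j : ℤ, P {ω | (W j ω).1 ∉ ({phi3, phi6, phi9, phi12} : Set Rule)} = 0 := by
    intro j
    have hmu0 : mu (({phi3, phi6, phi9, phi12} : Set Rule)ᶜ) = 0 := by
      have hU : (({phi3, phi6, phi9, phi12} : Set Rule)ᶜ)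
          = ⋃ r ∈ (({phi3, phi6, phi9, phi12} : Set Rule)ᶜ), {r} :=
        (Set.biUnion_of_singleton _).symm
      rw [hU, measure_biUnion_null_iff (Set.to_countable _)]
      intro r hr
      by_contra hne
      exact hr (hsupp hne)
    have hset : {ω | (W j ω).1 ∉ ({phi3, phi6, phi9, phi12} : Set Rule)}
        = W j ⁻¹' ((({phi3, phi6, phi9, phi12} : Set Rule)ᶜ) ×ˢ Set.univ) := by
      ext ω; simp
    rw [hset, ← Measure.map_apply (hmeas j) (Set.to_countable _).measurableSet, hlaw j,
      Measure.prod_prod, hmu0, zero_mul]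
  intro n
  induction n with
  | zero =>
    intro T hT ε
    rw [Finset.card_eq_zero] at hT
    subst hT
    simp
  | succ n ih =>
    intro T hT ε
    have hne : T.Nonempty := Finset.card_pos.mp (by omega)
    obtain ⟨m, hmT, hmax⟩ : ∃ m ∈ T, ∀ s ∈ T, s ≤ m :=
      ⟨T.max' hne, T.max'_mem hne, fun s hs => T.le_max' s hs⟩
    set T' := T.erase m with hT'def
    have hT' : T'.card = n := by
      rw [hT'def, Finset.card_erase_of_mem hmT]
      omega
    set k : ℤ := i - m with hk
    set J : Finset ℤ := Finset.Icc (i - m + 1) (i + m) with hJdef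
    have hkJ : k ∉ J := by
      simp only [hJdef, hk, Finset.mem_Icc]
      omega
    set res : Ω → (J → Rule × Bool) := fun ω j => W j ω with hres
    have hres_meas : Measurable res := measurable_pi_lambda _ fun j => hmeas j
    set A : Set (J → Rule × Bool) :=
      {u | ∀ s ∈ T', evolveZ (ruleOf J u) (valOf J u) s i = ε s} with hA
    set B : Set (J → Rule × Bool) :=
      {u | ∀ (j : ℤ) (h : j ∈ J), (u ⟨j, h⟩).1 ∈ ({phi3, phi6, phi9, phi12} : Set Rule)} with hB
    set g : (J → Rule × Bool) → Bool :=
      fun u => evolveZ (ruleOf J u) (fun j => if j = k then false else valOf J u j) m i with hg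
    -- the event over T' is a preimage under res
    have key : ∀ (ω : Ω), ∀ s ∈ T',
        traj W ω i s = evolveZ (ruleOf J (res ω)) (valOf J (res ω)) s i := by
      intro ω s hs
      have hsm : s ≠ m ∧ s ∈ T := Finset.mem_erase.mp hs
      have hslt : s < m := lt_of_le_of_ne (hmax s hsm.2) hsm.1
      exact traj_restr W i s J
        (fun j h1 h2 => Finset.mem_Icc.mpr ⟨by omega, by omega⟩) ω
    set E' : Set Ω := {ω | ∀ s ∈ T', traj W ω i s = ε s} with hE'def
    have hE' : E' = res ⁻¹' A := by
      ext ω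
      simp only [hE'def, Set.mem_setOf_eq, Set.mem_preimage, hA]
      exact forall₂_congr fun s hs => by rw [key ω s hs]
    -- B is conull
    have hBnull : P (res ⁻¹' Bᶜ) = 0 := by
      refine measure_mono_null ?_
        (measure_iUnion_null (fun j : ℤ =>
          bad_null j))
      intro ω hω
      simp only [Set.mem_preimage, Set.mem_compl_iff, hB, Set.mem_setOf_eq, not_forall] at hω
      obtain ⟨j, hj, hbad⟩ := hω
      exact Set.mem_iUnion.mpr ⟨j, hbad⟩
    -- decomposition of the top coordinate on the good set
    have hXm : ∀ ω : Ω, res ω ∈ B → traj W ω i m = xor ((W k ω).2) (g (res ω)) := by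
      intro ω hω
      have h1 : traj W ω i m
          = xor ((W k ω).2)
            (evolveZ (fun j => (W j ω).1) (fun j => if j = k then false else (W j ω).2) m i) := by
        unfold traj
        exact evolveZ_xor m i k hk (fun j => (W j ω).1) (fun j => (W j ω).2)
          (fun j h1 h2 => by
            have hjJ : j ∈ J := Finset.mem_Icc.mpr ⟨by omega, by omega⟩
            exact hω j hjJ)
      rw [h1]
      congr 1
      refine evolveZ_congr m i _ _ _ _ (fun j hj1 hj2 => ?_) (fun j hj1 hj2 => ?_)
      · have hjJ : j ∈ J := Finset.mem_Icc.mpr ⟨by omega, by omega⟩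
        simp only [ruleOf, dif_pos hjJ]
        rfl
      · by_cases hjk : j = k
        · rw [if_pos hjk, if_pos hjk]
        · have hjJ : j ∈ J := Finset.mem_Icc.mpr ⟨by omega, by omega⟩
          rw [if_neg hjk, if_neg hjk]
          simp only [valOf, dif_pos hjJ]
          rfl
    -- splitting off the top coordinate
    have hins : insert m T' = T := Finset.insert_erase hmT
    have hsplit : {ω | ∀ s ∈ T, traj W ω i s = ε s}
        = (E' ∩ {ω | traj W ω i m = ε m}) := by
      ext ω
      simp only [Set.mem_setOf_eq, Set.mem_inter_iff, hE'def, ← hins,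
        Finset.forall_mem_insert]
      tauto
    -- the product representation
    set Z : Ω → (J → Rule × Bool) × (Rule × Bool) := fun ω => (res ω, W k ω) with hZ
    set C : Set ((J → Rule × Bool) × (Rule × Bool)) :=
      {p | p.1 ∈ A ∩ B ∧ p.2.2 = xor (ε m) (g p.1)} with hC
    have boolfact : ∀ v G e : Bool, (xor v G = e) ↔ (v = xor e G) := by decide
    have hCset : (E' ∩ {ω | traj W ω i m = ε m}) ∩ res ⁻¹' B = Z ⁻¹' C := by
      ext ω
      simp only [Set.mem_inter_iff, Set.mem_preimage, Set.mem_setOf_eq, hC, hZ]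
      rw [Set.ext_iff.mp hE' ω]
      simp only [Set.mem_preimage]
      constructor
      · rintro ⟨⟨h1, h2⟩, h3⟩
        rw [hXm ω h3] at h2
        exact ⟨⟨h1, h3⟩, (boolfact _ _ _).mp h2⟩
      · rintro ⟨⟨h1, h3⟩, h2⟩
        refine ⟨⟨h1, ?_⟩, h3⟩
        rw [hXm ω h3]
        exact (boolfact _ _ _).mpr h2
    have hZmeas : Measurable Z := hres_meas.prodMk (hmeas k)
    have hmap : P.map Z = (P.map res).prod (P.map (W k)) := by
      refine (indepFun_iff_map_prod_eq_prod_map_map hres_meas.aemeasurable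
        (hmeas k).aemeasurable).mp ?_
      have h1 := hindep.indepFun_finset J {k}
        (Finset.disjoint_singleton_right.mpr hkJ) hmeas
      have h2 := h1.comp (measurable_id (α := J → Rule × Bool))
        (measurable_pi_apply (⟨k, Finset.mem_singleton_self k⟩ : ({k} : Finset ℤ)))
      exact h2
    have hhalf : ∀ b : Bool, (mu.prod berHalf) {v : Rule × Bool | v.2 = b} = 2⁻¹ := by
      intro b
      have : {v : Rule × Bool | v.2 = b} = Set.univ ×ˢ {b} :=
        Set.ext fun v => ⟨fun h => ⟨trivial, h⟩, fun h => h.2⟩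
      rw [this, Measure.prod_prod, measure_univ, one_mul, berHalf_singleton]
    calc P {ω | ∀ s ∈ T, traj W ω i s = ε s}
        = P (E' ∩ {ω | traj W ω i m = ε m}) := by rw [hsplit]
      _ = P ((E' ∩ {ω | traj W ω i m = ε m}) ∩ res ⁻¹' B) := by
          refine (measure_inter_conull ?_).symm
          rw [← Set.preimage_compl]
          exact hBnull
      _ = P (Z ⁻¹' C) := by rw [hCset]
      _ = (P.map Z) C := (Measure.map_apply hZmeas (Set.to_countable C).measurableSet).symm
      _ = ((P.map res).prod (mu.prod berHalf)) C := by rw [hmap, hlaw k]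
      _ = ∫⁻ u, (mu.prod berHalf) (Prod.mk u ⁻¹' C) ∂(P.map res) :=
          Measure.prod_apply (Set.to_countable C).measurableSet
      _ = ∫⁻ u, (A ∩ B).indicator (fun _ => (2 : ENNReal)⁻¹) u ∂(P.map res) := by
          refine lintegral_congr fun u => ?_
          by_cases hu : u ∈ A ∩ B
          · have hpre : Prod.mk u ⁻¹' C = {v : Rule × Bool | v.2 = xor (ε m) (g u)} := by
              ext v
              simp only [Set.mem_preimage, hC, Set.mem_setOf_eq]
              exact ⟨fun hv => hv.2, fun hv => ⟨hu, hv⟩⟩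
            rw [hpre, hhalf, Set.indicator_of_mem hu]
          · have hpre : Prod.mk u ⁻¹' C = ∅ := by
              refine Set.eq_empty_iff_forall_notMem.mpr fun v hv => ?_
              simp only [Set.mem_preimage, hC, Set.mem_setOf_eq] at hv
              exact hu hv.1
            rw [hpre, measure_empty, Set.indicator_of_notMem hu]
      _ = (2 : ENNReal)⁻¹ * (P.map res) (A ∩ B) := by
          rw [lintegral_indicator (Set.to_countable _).measurableSet, setLIntegral_const]
      _ = (2 : ENNReal)⁻¹ * P (E' ∩ res ⁻¹' B) := by
          rw [Measure.map_apply hres_meas (Set.to_countable _).measurableSet,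
            Set.preimage_inter, hE']
      _ = (2 : ENNReal)⁻¹ * P E' := by
          rw [measure_inter_conull (by rw [← Set.preimage_compl]; exact hBnull)]
      _ = (2 : ENNReal)⁻¹ ^ (n + 1) := by
          rw [ih T' hT' ε, pow_succ, mul_comm]

-- ### from cylinders to independence

lemma comap_bool_eq {α : Type*} (f : α → Bool) :
    MeasurableSpace.comap f inferInstance
      = MeasurableSpace.generateFrom {f ⁻¹' {true}} := by
  apply le_antisymm
  · rintro s ⟨t, -, rfl⟩
    have ht : t = ∅ ∨ t = {true} ∨ t = {false} ∨ t = Set.univ := by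
      by_cases h1 : true ∈ t <;> by_cases h2 : false ∈ t
      · right; right; right; ext x; cases x <;> simp [h1, h2]
      · right; left; ext x; cases x <;> simp [h1, h2]
      · right; right; left; ext x; cases x <;> simp [h1, h2]
      · left; ext x; cases x <;> simp [h1, h2]
    rcases ht with rfl | rfl | rfl | rfl
    · rw [Set.preimage_empty]
      exact @MeasurableSet.empty _ (MeasurableSpace.generateFrom {f ⁻¹' {true}})
    · exact MeasurableSpace.measurableSet_generateFrom rfl
    · have hcompl : f ⁻¹' {false} = (f ⁻¹' {true})ᶜ := by
        ext x; cases hfx : f x <;> simp [hfx]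
      rw [hcompl]
      exact MeasurableSet.compl (s := f ⁻¹' {true})
        (MeasurableSpace.measurableSet_generateFrom rfl)
    · rw [Set.preimage_univ]
      exact @MeasurableSet.univ _ (MeasurableSpace.generateFrom {f ⁻¹' {true}})
  · refine MeasurableSpace.generateFrom_le ?_
    rintro s rfl
    exact ⟨{true}, trivial, rfl⟩

theorem stmt9_aux (mu : Measure Rule) [IsProbabilityMeasure mu]
    (hsupp : ruleSupport mu ⊆ {phi3, phi6, phi9, phi12})
    {Ω : Type*} [MeasurableSpace Ω] (P : Measure Ω) [IsProbabilityMeasure P]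
    (W : ℤ → Ω → Rule × Bool) (hmeas : ∀ i, Measurable (W i))
    (hindep : iIndepFun W P)
    (hlaw : ∀ i, Measure.map (W i) P = mu.prod berHalf) :
    ∀ i : ℤ,
      (iIndepFun (fun t ω => traj W ω i t) P ∧
        ∀ t : ℕ, P {ω | traj W ω i t = true} = 1/2) ∧
      ∀ t : ℕ, 1 ≤ t → ∀ ε : ℕ → Bool,
        P {ω | ∀ s, s < t → traj W ω i s = ε s} = (1/2 : ENNReal) ^ t := by
  intro i
  have cyl : ∀ (T : Finset ℕ) (ε : ℕ → Bool),
      P {ω | ∀ s ∈ T, traj W ω i s = ε s} = (2 : ENNReal)⁻¹ ^ T.card :=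
    fun T ε => cylinder_prob mu hsupp P W hmeas hindep hlaw i T.card T rfl ε
  have Xmeas : ∀ t : ℕ, Measurable (fun ω => traj W ω i t) :=
    fun t => measurable_traj W hmeas i t
  have marg : ∀ t : ℕ, P {ω | traj W ω i t = true} = (2 : ENNReal)⁻¹ := by
    intro t
    have h := cyl {t} (fun _ => true)
    simpa using h
  refine ⟨⟨?_, fun t => by rw [marg t, one_div]⟩, ?_⟩
  · rw [iIndepFun_iff_iIndep]
    refine iIndepSets.iIndep (fun t => (Xmeas t).comap_le)
      (fun t => {{ω | traj W ω i t = true}}) (fun t => IsPiSystem.singleton _)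
      (fun t => ?_) ?_
    · exact comap_bool_eq _
    · rw [iIndepSets_iff]
      intro S f hf
      have hfeq : ∀ s ∈ S, f s = {ω | traj W ω i s = true} := fun s hs => by
        simpa using hf s hs
      have hiInter : ⋂ s ∈ S, f s = {ω | ∀ s ∈ S, traj W ω i s = true} := by
        ext ω
        simp only [Set.mem_iInter, Set.mem_setOf_eq]
        refine forall₂_congr fun s hs => ?_
        rw [hfeq s hs]
        rfl
      rw [hiInter, cyl S (fun _ => true),
        Finset.prod_congr rfl (fun s hs => by rw [hfeq s hs, marg s]),
        Finset.prod_const]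
  · intro t _ ε
    have hset : {ω | ∀ s, s < t → traj W ω i s = ε s}
        = {ω | ∀ s ∈ Finset.range t, traj W ω i s = ε s} := by
      simp [Finset.mem_range]
    rw [hset, cyl (Finset.range t) ε, Finset.card_range, one_div]

/-- for the RBCA on ℤ with rule distribution μ supported in
`{φ3, φ6, φ9, φ12}`, for every cell `i` the random variables `X_i(0), X_i(1), …`
are independent Bernoulli(1/2); equivalently every length-`t` cylinder
(`t ≥ 1`) has probability `2^{-t}`. -/
theorem stmt9 (mu : Measure Rule) [IsProbabilityMeasure mu]
    (hsupp : ruleSupport mu ⊆ {phi3, phi6, phi9, phi12})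
    {Ω : Type*} [MeasurableSpace Ω] (P : Measure Ω) [IsProbabilityMeasure P]
    (W : ℤ → Ω → Rule × Bool) (hmeas : ∀ i, Measurable (W i))
    (hindep : iIndepFun W P)
    (hlaw : ∀ i, Measure.map (W i) P = mu.prod berHalf) :
    ∀ i : ℤ,
      (iIndepFun (fun t ω => traj W ω i t) P ∧
        ∀ t : ℕ, P {ω | traj W ω i t = true} = 1/2) ∧
      ∀ t : ℕ, 1 ≤ t → ∀ ε : ℕ → Bool,
        P {ω | ∀ s, s < t → traj W ω i s = ε s} = (1/2 : ENNReal) ^ t := by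
  exact stmt9_aux mu hsupp P W hmeas hindep hlaw
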